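/- Branching of the G_2 polynomial C_{(0,2)} under the maximal subgroup A_1 (projection matrix (10 6)): For every real number y, setting X₁ = y¹⁰ − 9y⁸ + 27y⁶ − 31y⁴ + 10y² − 2 and X₂ = y⁶ − 5y⁴ + 6y² − 2, one has X₂² − 2X₂ − 2X₁ − 6 = T̃₁₂(y) + T̃₈(y) + 3·T̃₄(y) + 8·T̃₂(y) + 12, where T̃_n denotes the rescaled Chebyshev polynomial of the first kind, T̃_n(t) = 2·T_n(t/2). Equivalently, y¹² − 12y¹⁰ + 55y⁸ − 120y⁶ + 128y⁴ − 56y² + 6 = T̃₁₂(y) + T̃₈(y) + 3·T̃₄(y) + 8·T̃₂(y) + 12. -/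
import Mathlib

open Polynomial Polynomial.Chebyshev

noncomputable def Ttilde (n : ℤ) (t : ℝ) : ℝ :=
  2 * (Polynomial.Chebyshev.T ℝ n).eval (t / 2)

lemma Tev (n : ℤ) (x : ℝ) :
    (T ℝ (n + 2)).eval x = 2 * x * (T ℝ (n + 1)).eval x - (T ℝ n).eval x := by
  rw [T_add_two]; simp [eval_mul]

lemma Tev_explicit (x : ℝ) :
    (T ℝ 2).eval x = 2*x^2 - 1 ∧
    (T ℝ 4).eval x = 8*x^4 - 8*x^2 + 1 ∧
    (T ℝ 8).eval x = 128*x^8 - 256*x^6 + 160*x^4 - 32*x^2 + 1 ∧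
    (T ℝ 12).eval x = 2048*x^12 - 6144*x^10 + 6912*x^8 - 3584*x^6 + 840*x^4 - 72*x^2 + 1 := by
  have h0 : (T ℝ 0).eval x = 1 := by simp
  have h1 : (T ℝ 1).eval x = x := by simp
  have h2 := Tev 0 x
  have h3 := Tev 1 x
  have h4 := Tev 2 x
  have h5 := Tev 3 x
  have h6 := Tev 4 x
  have h7 := Tev 5 x
  have h8 := Tev 6 x
  have h9 := Tev 7 x
  have h10 := Tev 8 x
  have h11 := Tev 9 x
  have h12 := Tev 10 x
  norm_num at h2 h3 h4 h5 h6 h7 h8 h9 h10 h11 h12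
  have e2 : (T ℝ 2).eval x = 2*x^2 - 1 := by linear_combination h2
  have e3 : (T ℝ 3).eval x = 4*x^3 - 3*x := by linear_combination h3 + 2*x*e2
  have e4 : (T ℝ 4).eval x = 8*x^4 - 8*x^2 + 1 := by linear_combination h4 + 2*x*e3 - e2
  have e5 : (T ℝ 5).eval x = 16*x^5 - 20*x^3 + 5*x := by linear_combination h5 + 2*x*e4 - e3
  have e6 : (T ℝ 6).eval x = 32*x^6 - 48*x^4 + 18*x^2 - 1 := by
    linear_combination h6 + 2*x*e5 - e4
  have e7 : (T ℝ 7).eval x = 64*x^7 - 112*x^5 + 56*x^3 - 7*x := by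
    linear_combination h7 + 2*x*e6 - e5
  have e8 : (T ℝ 8).eval x = 128*x^8 - 256*x^6 + 160*x^4 - 32*x^2 + 1 := by
    linear_combination h8 + 2*x*e7 - e6
  have e9 : (T ℝ 9).eval x = 256*x^9 - 576*x^7 + 432*x^5 - 120*x^3 + 9*x := by
    linear_combination h9 + 2*x*e8 - e7
  have e10 : (T ℝ 10).eval x = 512*x^10 - 1280*x^8 + 1120*x^6 - 400*x^4 + 50*x^2 - 1 := by
    linear_combination h10 + 2*x*e9 - e8
  have e11 : (T ℝ 11).eval x = 1024*x^11 - 2816*x^9 + 2816*x^7 - 1232*x^5 + 220*x^3 - 11*x := by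
    linear_combination h11 + 2*x*e10 - e9
  have e12 : (T ℝ 12).eval x =
      2048*x^12 - 6144*x^10 + 6912*x^8 - 3584*x^6 + 840*x^4 - 72*x^2 + 1 := by
    linear_combination h12 + 2*x*e11 - e10
  exact ⟨e2, e4, e8, e12⟩

/-- Branching of the `G₂` polynomial `C_{(0,2)} = X₂² − 2X₂ − 2X₁ − 6` under the maximal
subgroup `A₁` (projection matrix `(10 6)`, substitution
`X₁ ↦ Y¹⁰ − 9Y⁸ + 27Y⁶ − 31Y⁴ + 10Y² − 2`, `X₂ ↦ Y⁶ − 5Y⁴ + 6Y² − 2`):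
`X₂² − 2X₂ − 2X₁ − 6 = T̃₁₂(y) + T̃₈(y) + 3T̃₄(y) + 8T̃₂(y) + 12`, equivalently
`y¹² − 12y¹⁰ + 55y⁸ − 120y⁶ + 128y⁴ − 56y² + 6 = T̃₁₂(y) + T̃₈(y) + 3T̃₄(y) + 8T̃₂(y) + 12`. -/
theorem G2_C02_branching_A1 (y X₁ X₂ : ℝ)
    (hX₁ : X₁ = y ^ 10 - 9 * y ^ 8 + 27 * y ^ 6 - 31 * y ^ 4 + 10 * y ^ 2 - 2)
    (hX₂ : X₂ = y ^ 6 - 5 * y ^ 4 + 6 * y ^ 2 - 2) :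
    X₂ ^ 2 - 2 * X₂ - 2 * X₁ - 6 =
      Ttilde 12 y + Ttilde 8 y + 3 * Ttilde 4 y + 8 * Ttilde 2 y + 12 ∧
    y ^ 12 - 12 * y ^ 10 + 55 * y ^ 8 - 120 * y ^ 6 + 128 * y ^ 4 - 56 * y ^ 2 + 6 =
      Ttilde 12 y + Ttilde 8 y + 3 * Ttilde 4 y + 8 * Ttilde 2 y + 12 := by
  obtain ⟨e2, e4, e8, e12⟩ := Tev_explicit (y / 2)
  unfold Ttilde
  rw [e2, e4, e8, e12, hX₁, hX₂]
  constructor <;> ring
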